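/- Let z ∈ ℂ, let c be real with 0 < c < 1 and s² = 1 − c². If ρ ∈ ℂ, ν′ ∈ [0, 1], and η ∈ [−1, 1] satisfy ρ + z·ν′ + 2c·η·√z·√ν′·√ρ − s²·z = 0, then ρ lies in the set {t·z : t ∈ [0, 1]} ∪ {w ∈ ℂ : |w| ≤ c²·|z|}, i.e. every such root ρ lies either on the line segment joining 0 to z or in the closed disk of radius c²·|z| centered at the origin. -/

import Mathlib

/-- Principal branch of the complex square root. -/
noncomputable def csqrt (w : ℂ) : ℂ := w ^ ((1 : ℂ) / 2)


lemma sq_csqrt (w : ℂ) : csqrt w ^ 2 = w := by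
  unfold csqrt
  rcases eq_or_ne w 0 with h | h
  · simp [h, Complex.zero_cpow (by norm_num : (1:ℂ)/2 ≠ 0)]
  · rw [sq, ← Complex.cpow_add _ _ h]; norm_num

lemma csqrt_ofReal (x : ℝ) (hx : 0 ≤ x) : csqrt (x:ℂ) = (Real.sqrt x : ℂ) := by
  unfold csqrt
  rw [show ((1:ℂ)/2) = ((1/2 : ℝ) : ℂ) by norm_num, ← Complex.ofReal_cpow hx,
    ← Real.sqrt_eq_rpow]

set_option maxHeartbeats 1600000 in
/-- for fixed z ∈ ℂ and 0 < c < 1, s² = 1 − c², every root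
ρ ∈ ℂ of ρ + zν′ + 2cη√z√ν′√ρ − s²z = 0 with ν′ ∈ [0,1], η ∈ [−1,1] lies
either on the segment joining 0 to z or in the closed disk of radius
c²|z| centered at the origin. -/

theorem rho_root_in_segment_or_disk
    (z : ℂ) (c : ℝ) (hc : 0 < c) (hc1 : c < 1)
    (ρ : ℂ) (ν' η : ℝ) (hν : ν' ∈ Set.Icc (0 : ℝ) 1) (hη : η ∈ Set.Icc (-1 : ℝ) 1)
    (heq : ρ + z * (ν' : ℂ)
        + 2 * (c : ℂ) * (η : ℂ) * csqrt z * csqrt ((ν' : ℝ) : ℂ) * csqrt ρ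
        - (1 - (c : ℂ) ^ 2) * z = 0) :
    (∃ t : ℝ, t ∈ Set.Icc (0 : ℝ) 1 ∧ ρ = (t : ℂ) * z)
      ∨ ‖ρ‖ ≤ c ^ 2 * ‖z‖ := by
  obtain ⟨hν0, hν1⟩ := hν
  obtain ⟨hη0, hη1⟩ := hη
  set u := csqrt ρ with hu_def
  set v := csqrt z with hv_def
  have hu : u ^ 2 = ρ := sq_csqrt ρ
  have hv : v ^ 2 = z := sq_csqrt z
  clear_value u v
  set n : ℝ := Real.sqrt ν' with hn_def
  have hn0 : 0 ≤ n := Real.sqrt_nonneg _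
  have hn2 : n ^ 2 = ν' := Real.sq_sqrt hν0
  have hw : csqrt ((ν' : ℝ) : ℂ) = (n : ℂ) := csqrt_ofReal ν' hν0
  clear hn_def; clear_value n
  have hn1 : n ≤ 1 := by nlinarith
  rw [hw] at heq
  have hνc : ((ν' : ℝ) : ℂ) = (n : ℂ) ^ 2 := by
    rw [← hn2]; push_cast; ring
  set m : ℝ := c * η * n with hm_def
  set D : ℝ := 1 - c ^ 2 - n ^ 2 + m ^ 2 with hD_def
  have key : (u + (m : ℂ) * v) ^ 2 = (D : ℂ) * v ^ 2 := by
    rw [hνc] at heq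
    push_cast [hm_def, hD_def]
    linear_combination heq + hu - (1 - (c:ℂ)^2 - (n:ℂ)^2) * hv
  have hm2 : m ^ 2 = c ^ 2 * η ^ 2 * n ^ 2 := by rw [hm_def]; ring
  have hmabs : |m| ≤ c * n := by
    have h1 : |m| = c * |η| * n := by
      rw [hm_def, abs_mul, abs_mul, abs_of_nonneg hc.le, abs_of_nonneg hn0]
    have h2 : |η| ≤ 1 := abs_le.mpr ⟨hη0, hη1⟩
    rw [h1]
    nlinarith [mul_nonneg hc.le hn0]
  have hm2' : m ^ 2 ≤ c ^ 2 * n ^ 2 := by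
    nlinarith [hm2, mul_nonneg (mul_nonneg (sq_nonneg c) (sq_nonneg n)) (by nlinarith : (0:ℝ) ≤ 1 - η ^ 2)]
  clear_value m D
  clear hm_def hm2
  rcases le_or_gt 0 D with hD | hD
  · -- real discriminant: segment case
    left
    set r : ℝ := Real.sqrt D with hr_def
    have hr0 : 0 ≤ r := Real.sqrt_nonneg _
    have hr2 : r ^ 2 = D := Real.sq_sqrt hD
    clear hr_def; clear_value r
    set p : ℝ := Real.sqrt (1 - c ^ 2) with hp_def
    set q : ℝ := Real.sqrt (1 - n ^ 2) with hq_def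
    have hp0 : 0 ≤ p := Real.sqrt_nonneg _
    have hq0 : 0 ≤ q := Real.sqrt_nonneg _
    have hp2 : p ^ 2 = 1 - c ^ 2 := Real.sq_sqrt (by nlinarith)
    have hq2 : q ^ 2 = 1 - n ^ 2 := Real.sq_sqrt (by nlinarith)
    clear hp_def hq_def; clear_value p q
    have hrpq : r ≤ p * q := by
      have h1 : r ^ 2 ≤ (p * q) ^ 2 := by nlinarith
      nlinarith [mul_nonneg hp0 hq0]
    have hbound : (|m| + r) ^ 2 ≤ 1 := by
      have h2 : |m| + r ≤ c * n + p * q := by linarith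
      have h3 : (c * n + p * q) ^ 2 ≤ 1 := by nlinarith [sq_nonneg (c * q - n * p)]
      nlinarith [abs_nonneg m]
    have hfac : (u + (m : ℂ) * v - (r : ℂ) * v) * (u + (m : ℂ) * v + (r : ℂ) * v) = 0 := by
      have h4 : ((r : ℝ) : ℂ) ^ 2 = (D : ℂ) := by push_cast [← hr2]; ring
      linear_combination key - v ^ 2 * h4
    rcases mul_eq_zero.mp hfac with h | h
    · refine ⟨(r - m) ^ 2, ⟨sq_nonneg _, by nlinarith [abs_nonneg m, neg_abs_le m, le_abs_self m]⟩, ?_⟩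
      have hufix : u = ((r : ℂ) - (m : ℂ)) * v := by linear_combination h
      rw [← hu, hufix, ← hv]; push_cast; ring
    · refine ⟨(r + m) ^ 2, ⟨sq_nonneg _, by nlinarith [abs_nonneg m, neg_abs_le m, le_abs_self m]⟩, ?_⟩
      have hufix : u = -((r : ℂ) + (m : ℂ)) * v := by linear_combination h
      rw [← hu, hufix, ← hv]; push_cast; ring
  · -- complex discriminant: disk case
    right
    set r : ℝ := Real.sqrt (-D) with hr_def
    have hr2 : r ^ 2 = -D := Real.sq_sqrt (by linarith)
    clear hr_def; clear_value r
    have hfac : (u + (m : ℂ) * v - Complex.I * (r : ℂ) * v) *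
        (u + (m : ℂ) * v + Complex.I * (r : ℂ) * v) = 0 := by
      have h1 : ((r : ℝ) : ℂ) ^ 2 = -(D : ℂ) := by exact_mod_cast congrArg Complex.ofReal hr2
      linear_combination key + v ^ 2 * h1 - v ^ 2 * (r:ℂ) ^ 2 * Complex.I_sq
    have habs : ‖ρ‖ = (m ^ 2 + r ^ 2) * ‖z‖ := by
      rcases mul_eq_zero.mp hfac with h | h
      · have hufix : u = (Complex.I * (r : ℂ) - (m : ℂ)) * v := by linear_combination h
        have hρ : ρ = (Complex.I * (r : ℂ) - (m : ℂ)) ^ 2 * z := by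
          rw [← hu, hufix, ← hv]; ring
        rw [hρ, norm_mul, norm_pow, Complex.sq_norm]
        congr 1
        simp [Complex.normSq_apply]; ring
      · have hufix : u = -(Complex.I * (r : ℂ) + (m : ℂ)) * v := by linear_combination h
        have hρ : ρ = (Complex.I * (r : ℂ) + (m : ℂ)) ^ 2 * z := by
          rw [← hu, hufix, ← hv]; ring
        rw [hρ, norm_mul, norm_pow, Complex.sq_norm]
        congr 1
        simp [Complex.normSq_apply]; ring
    rw [habs]
    have h5 : m ^ 2 + r ^ 2 ≤ c ^ 2 := by nlinarith
    nlinarith [norm_nonneg z]
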